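/- Let $B \in \mathbb{R}^{d \times d}$ be essentially non-negative (i.e., all off-diagonal entries of $B$ are nonnegative). If $e^B = I$, then $B = 0$. -/

import Mathlib

/-!
Shifting by a scalar, `A = B + c • 1` is entrywise nonnegative for large `c`, and
`exp A = Real.exp c • exp B`. Every term of the exponential series of `A` is nonnegative, so
`A ≤ exp A` entrywise; since `exp B = 1` is diagonal, the off-diagonal entries of `A`, which are
those of `B`, vanish. A diagonal `B` with `exp B = 1` has `Real.exp (B i i) = 1`, hence `B = 0`.
-/

open NormedSpace

namespace Matrix

variable {ι : Type*} [Fintype ι] [DecidableEq ι]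

theorem le_exp_apply_of_nonneg {A : Matrix ι ι ℝ} (hA : ∀ i j, 0 ≤ A i j) (i j : ι) :
    A i j ≤ exp A i j := by
  -- `exp` does not depend on a norm, but its series lemmas need one; any matrix norm will do.
  let _ : NormedRing (Matrix ι ι ℝ) := Matrix.linftyOpNormedRing
  let _ : NormedAlgebra ℝ (Matrix ι ι ℝ) := Matrix.linftyOpNormedAlgebra
  have hsum : HasSum (fun n : ℕ => ((n.factorial : ℝ)⁻¹ • A ^ n) i j) (exp A i j) :=
    Pi.hasSum.mp (Pi.hasSum.mp (exp_series_hasSum_exp' (𝕂 := ℝ) A) i) j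
  simpa using le_hasSum hsum 1 fun n _ => mul_nonneg (by positivity) (pow_apply_nonneg hA n i j)

theorem exp_add_smul_one (A : Matrix ι ι ℝ) (c : ℝ) :
    exp (A + c • 1) = Real.exp c • exp A := by
  rw [exp_add_of_commute _ _ ((Commute.one_right A).smul_right c), smul_one_eq_diagonal,
    exp_diagonal, Pi.exp_def, ← Real.exp_eq_exp_ℝ, ← smul_one_eq_diagonal, mul_smul_one]

theorem exists_nonneg_add_smul_one {B : Matrix ι ι ℝ} (hB : ∀ i j, i ≠ j → 0 ≤ B i j) :
    ∃ c : ℝ, ∀ i j, 0 ≤ (B + c • 1) i j := by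
  obtain ⟨c, hc⟩ := Finite.exists_le fun i => -B i i
  refine ⟨c, fun i j => ?_⟩
  rcases eq_or_ne i j with rfl | hij
  · simp only [add_apply, smul_apply, one_apply_eq, smul_eq_mul, mul_one]
    linarith [hc i]
  · simpa [one_apply_ne hij] using hB i j hij

theorem isDiag_of_isDiag_exp {B : Matrix ι ι ℝ} (hB : ∀ i j, i ≠ j → 0 ≤ B i j)
    (h : (exp B).IsDiag) : B.IsDiag := by
  intro i j hij
  obtain ⟨c, hc⟩ := exists_nonneg_add_smul_one hB
  have hle := le_exp_apply_of_nonneg hc i j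
  rw [exp_add_smul_one, smul_apply, h hij, smul_zero, add_apply, smul_apply,
    one_apply_ne hij, smul_zero, add_zero] at hle
  exact le_antisymm hle (hB i j hij)

theorem IsDiag.eq_zero_of_exp_eq_one {B : Matrix ι ι ℝ} (hB : B.IsDiag) (h : exp B = 1) :
    B = 0 := by
  rw [← hB.diagonal_diag, exp_diagonal, ← diagonal_one, diagonal_injective.eq_iff,
    Pi.exp_def, ← Real.exp_eq_exp_ℝ] at h
  rw [← hB.diagonal_diag, diagonal_eq_zero]
  funext i
  exact Real.exp_eq_one_iff _ |>.mp (congrFun h i)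

end Matrix

theorem stmt11 {d : ℕ} (B : Matrix (Fin d) (Fin d) ℝ)
    (hB : ∀ i j, i ≠ j → 0 ≤ B i j)
    (h : NormedSpace.exp B = 1) : B = 0 :=
  (Matrix.isDiag_of_isDiag_exp hB (h ▸ Matrix.isDiag_one)).eq_zero_of_exp_eq_one h
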